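/- Let X be a finite connected simplicial complex, let G be a group acting on the left on a finite nonempty set S, and let φ ∈ Z¹(X;G). Then the projection map f:Y_φ→X, f([u,s])=u, is a covering map, i.e., a surjective simplicial map such that for every vertex u of X and every ũ ∈ f⁻¹(u), f restricts to an isomorphism from the star of ũ in Y_φ onto the star of u in X. -/

import Mathlib

open Finset

variable {V : Type*} [DecidableEq V]

/-- A finite abstract simplicial complex on vertex type `V`. -/
structure SComplex (V : Type*) [DecidableEq V] where
  faces : Finset (Finset V)
  nonempty_of_mem : ∀ σ ∈ faces, σ.Nonempty
  down_closed : ∀ σ ∈ faces, ∀ τ ⊆ σ, τ.Nonempty → τ ∈ faces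

namespace SComplex

/-- The set `X(k)` of `k`-dimensional simplices (cardinality `k+1`). -/
def simps (X : SComplex V) (k : ℕ) : Finset (Finset V) :=
  X.faces.filter fun σ => σ.card = k + 1

/-- The number of vertices of a top-dimensional face. -/
def rank (X : SComplex V) : ℕ := X.faces.sup Finset.card

/-- The weight `c_X(σ)`. -/
noncomputable def weight (X : SComplex V) (σ : Finset V) : ℝ :=
  (((X.simps (X.rank - 1)).filter fun τ => σ ⊆ τ).card : ℝ) /
    ((X.rank.choose σ.card) * ((X.simps (X.rank - 1)).card))

/-- `X` is pure of dimension `n-1` : every face is contained in a face with `n` vertices. -/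
def IsPureOfRank (X : SComplex V) (n : ℕ) : Prop :=
  X.faces.Nonempty ∧ ∀ σ ∈ X.faces, ∃ τ ∈ X.faces, σ ⊆ τ ∧ τ.card = n

/-- The link `lk(X,σ)`. -/
def lk (X : SComplex V) (σ : Finset V) : SComplex V where
  faces := X.faces.filter fun η => η ∪ σ ∈ X.faces ∧ Disjoint η σ
  nonempty_of_mem := fun η hη => X.nonempty_of_mem η (mem_filter.mp hη).1
  down_closed := by
    intro η hη τ hτη hτ
    rw [mem_filter] at hη ⊢
    refine ⟨X.down_closed η hη.1 τ hτη hτ,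
      X.down_closed (η ∪ σ) hη.2.1 (τ ∪ σ) (union_subset_union_left hτη) ?_,
      hη.2.2.mono_left hτη⟩
    exact hτ.mono subset_union_left

/-- The star `st(X,σ)`. -/
def star (X : SComplex V) (σ : Finset V) : Finset (Finset V) :=
  X.faces.filter fun τ => τ ∪ σ ∈ X.faces

/-- The vertices of `X`. -/
def verts (X : SComplex V) [Fintype V] : Finset V :=
  Finset.univ.filter fun v => ({v} : Finset V) ∈ X.faces

end SComplex
section Cochains

variable {G : Type*} [Group G]

/-- `φ ∈ C¹(X;G)`: an antisymmetric `G`-valued function on ordered pairs. -/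
def IsCochain (G : Type*) [Group G] (φ : V → V → G) : Prop :=
  ∀ u v : V, φ u v = (φ v u)⁻¹

/-- The coboundary `d₁φ(u,v,w) = φ(u,v)φ(v,w)φ(w,u)`. -/
def d1 (φ : V → V → G) (u v w : V) : G := φ u v * φ v w * φ w u

/-- `φ ∈ Z¹(X;G)`: a cochain all of whose triangle equations hold. -/
def IsCocycle (X : SComplex V) (φ : V → V → G) : Prop :=
  IsCochain G φ ∧ ∀ u v w : V, ({u, v, w} : Finset V) ∈ X.simps 2 → d1 φ u v w = 1

open Classical in
/-- The norm `‖φ‖`: total weight of the support of `φ`. -/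
noncomputable def norm1 (X : SComplex V) (φ : V → V → G) : ℝ :=
  ∑ e ∈ (X.simps 1).filter (fun e => ∃ u v : V, e = {u, v} ∧ φ u v ≠ 1), X.weight e

open Classical in
/-- The norm `‖d₁φ‖`: total weight of the 2-simplices whose equation is violated. -/
noncomputable def normD1 (X : SComplex V) (φ : V → V → G) : ℝ :=
  ∑ τ ∈ (X.simps 2).filter (fun τ => ∃ u v w : V, τ = {u, v, w} ∧ d1 φ u v w ≠ 1), X.weight τ

/-- `dist(φ,ψ) = ‖φψ⁻¹‖`. -/
noncomputable def dist1 (X : SComplex V) (φ ψ : V → V → G) : ℝ :=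
  norm1 X (fun u v => φ u v * (ψ u v)⁻¹)

/-- The cosystolic norm `‖φ‖_csy`: the distance from `φ` to `Z¹(X;G)`. -/
noncomputable def csyNorm (X : SComplex V) (φ : V → V → G) : ℝ :=
  sInf {d : ℝ | ∃ ψ : V → V → G, IsCocycle X ψ ∧ d = dist1 X φ ψ}

/-- The cosystolic expansion `h₁(X;G)`. -/
noncomputable def h1 (X : SComplex V) (G : Type*) [Group G] : ℝ :=
  sInf {r : ℝ | ∃ φ : V → V → G, IsCochain G φ ∧ ¬ IsCocycle X φ ∧
    r = normD1 X φ / csyNorm X φ}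

end Cochains

section Fix

variable (G : Type*) [Group G] (S : Type*) [Fintype S] [MulAction G S]

open Classical in
/-- `fix(g) = |{s ∈ S : g•s = s}|`. -/
noncomputable def fixCard (g : G) : ℕ :=
  (Finset.univ.filter fun s : S => g • s = s).card

/-- `Fix_G(S) = max_{g ≠ 1} fix(g)`. -/
noncomputable def FixG : ℕ :=
  sSup {k : ℕ | ∃ g : G, g ≠ 1 ∧ fixCard G S g = k}

end Fix
section Ycomplex

variable {G : Type*} [Group G] {S : Type*} [Fintype S] [DecidableEq S] [MulAction G S]
variable [Fintype V]

open Classical in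
/-- The complex `Y_φ` associated to a cochain `φ`, together with the projection
`Prod.fst : Y_φ → X`. -/
noncomputable def Ycomplex (X : SComplex V) (φ : V → V → G) (S : Type*)
    [Fintype S] [DecidableEq S] [MulAction G S] : SComplex (V × S) where
  faces := Finset.univ.filter fun σ : Finset (V × S) =>
    σ.image Prod.fst ∈ X.faces ∧ (σ.image Prod.fst).card = σ.card ∧
    ∀ p ∈ σ, ∀ q ∈ σ, p.1 ≠ q.1 → p.2 = φ p.1 q.1 • q.2
  nonempty_of_mem := by
    intro σ hσ
    rw [Finset.mem_filter] at hσ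
    exact Finset.image_nonempty.mp (X.nonempty_of_mem _ hσ.2.1)
  down_closed := by
    intro σ hσ τ hτσ hτ
    rw [Finset.mem_filter] at hσ ⊢
    obtain ⟨-, h1, h2, h3⟩ := hσ
    refine ⟨Finset.mem_univ _,
      X.down_closed _ h1 _ (Finset.image_subset_image hτσ) (Finset.image_nonempty.mpr hτ),
      ?_, fun p hp q hq => h3 p (hτσ hp) q (hτσ hq)⟩
    exact Finset.card_image_iff.mpr ((Finset.card_image_iff.mp h2).mono hτσ)

end Ycomplex

section Deficiency

variable {W : Type*} [DecidableEq W] [Fintype W] [Fintype V]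

open Classical in
/-- `D_f(ut)`: the edges in the link of `f(ut)` that are not covered by the image of the
link of `ut`. -/
noncomputable def Dset (Y : SComplex W) (X : SComplex V) (f : W → V) (ut : W) :
    Finset (Finset V) :=
  ((X.lk {f ut}).simps 1).filter fun e => ¬ ∃ η ∈ (Y.lk {ut}).faces, η.image f = e

/-- The local deficiency `μ_f(ut)`. -/
noncomputable def locDef (Y : SComplex W) (X : SComplex V) (f : W → V) (ut : W) : ℝ :=
  ∑ e ∈ Dset Y X f ut, (X.lk {f ut}).weight e

open Classical in
/-- The deficiency `m_f(Y)` of a map `f : Y → X`. -/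
noncomputable def deficiency (Y : SComplex W) (X : SComplex V) (f : W → V) : ℝ :=
  ∑ u ∈ X.verts, (X.weight {u} / ((Y.verts.filter fun w => f w = u).card : ℝ)) *
    ∑ ut ∈ Y.verts.filter (fun w => f w = u), locDef Y X f ut

end Deficiency
section MapOver

variable [Fintype V]

/-- An element of `M(X;G,S)`: a surjective simplicial `|S|`-to-`1` map onto `X` whose
vertex fibers are identified with `S` and whose edge fibers are matchings given by the
action of elements of `G`. -/
structure MapOver (X : SComplex V) (G : Type*) (S : Type*) [Group G] [Fintype S]
    [DecidableEq S] [MulAction G S] [Fintype V] where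
  Y : SComplex (V × S)
  simplicial : ∀ τ ∈ Y.faces, τ.image Prod.fst ∈ X.faces
  injOnFaces : ∀ τ ∈ Y.faces, (τ.image Prod.fst).card = τ.card
  surj : ∀ σ ∈ X.faces, ∃ τ ∈ Y.faces, τ.image Prod.fst = σ
  fiber : ∀ p : V × S, ({p} : Finset (V × S)) ∈ Y.faces ↔ ({p.1} : Finset V) ∈ X.faces
  edges : ∀ u v : V, ({u, v} : Finset V) ∈ X.simps 1 → ∃ g : G,
    ∀ s t : S, (({(u, s), (v, t)} : Finset (V × S)) ∈ Y.faces ↔ s = g • t)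

variable {G : Type*} [Group G] {S : Type*} [Fintype S] [DecidableEq S] [MulAction G S]

open Classical in
/-- The set of edges of `Y` lying over a given edge of the base. -/
noncomputable def edgeFiber (Y : SComplex (V × S)) (e : Finset V) :
    Finset (Finset (V × S)) :=
  (Y.simps 1).filter fun e' => e'.image Prod.fst = e

open Classical in
/-- The distance between two elements of `M(X;G,S)`: the weight of the set of edges of
`X` over which the two edge fibers differ. -/
noncomputable def mdist (X : SComplex V) (M₁ M₂ : MapOver X G S) : ℝ :=
  ∑ e ∈ (X.simps 1).filter (fun e => edgeFiber M₁.Y e ≠ edgeFiber M₂.Y e), X.weight e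

/-- The distance from an element of `M(X;G,S)` to the set `M₀(X;G,S)` of genuine covers. -/
noncomputable def distToCovers (X : SComplex V) (M : MapOver X G S) : ℝ :=
  sInf {d : ℝ | ∃ M' : MapOver X G S, deficiency M'.Y X Prod.fst = 0 ∧ d = mdist X M M'}

/-- The `(G,S)`-cover-stability `c(X;G,S)`. -/
noncomputable def coverStability (X : SComplex V) (G : Type*) (S : Type*) [Group G]
    [Fintype S] [DecidableEq S] [MulAction G S] : ℝ :=
  sInf {r : ℝ | ∃ M : MapOver X G S, deficiency M.Y X Prod.fst ≠ 0 ∧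
    r = deficiency M.Y X Prod.fst / distToCovers X M}

end MapOver
section Paths

/-- A (possibly closed) edge path in a complex: consecutive vertices span edges. -/
def IsEdgePath (K : SComplex V) (p : List V) : Prop :=
  (∀ v ∈ p, ({v} : Finset V) ∈ K.faces) ∧
    p.Chain' fun u v => ({u, v} : Finset V) ∈ K.faces

/-- Combinatorial homotopy of edge paths, generated by erasing repetitions and by
collapsing across simplices. -/
inductive Homotopic (K : SComplex V) : List V → List V → Prop
  | refl (p : List V) : Homotopic K p p
  | symm {p q : List V} : Homotopic K p q → Homotopic K q p
  | trans {p q r : List V} : Homotopic K p q → Homotopic K q r → Homotopic K p r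
  | collapse (p q : List V) (a b c : V) (h : ({a, b, c} : Finset V) ∈ K.faces) :
      Homotopic K (p ++ a :: b :: c :: q) (p ++ a :: c :: q)
  | dedup (p q : List V) (a : V) : Homotopic K (p ++ a :: a :: q) (p ++ a :: q)

/-- `K` is connected: any two vertices are joined by an edge path. -/
def SComplexConnected (K : SComplex V) : Prop :=
  ∀ u v : V, ({u} : Finset V) ∈ K.faces → ({v} : Finset V) ∈ K.faces →
    ∃ p : List V, IsEdgePath K p ∧ p.head? = some u ∧ p.getLast? = some v

/-- `K` is simply connected: connected, and every closed edge path is null-homotopic. -/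
def SimplyConnected (K : SComplex V) : Prop :=
  SComplexConnected K ∧
    ∀ (p : List V) (a : V), IsEdgePath K p → p.head? = some a → p.getLast? = some a →
      Homotopic K p [a]

end Paths

section OrderComplex

open Classical in
/-- The order complex of `L ∖ {⊥, ⊤}`: simplices are the nonempty chains avoiding
`⊥` and `⊤`. -/
noncomputable def orderComplex (L : Type*) [Lattice L] [BoundedOrder L] [Fintype L]
    [DecidableEq L] : SComplex L where
  faces := Finset.univ.filter fun σ : Finset L =>
    σ.Nonempty ∧ (∀ x ∈ σ, x ≠ ⊥ ∧ x ≠ ⊤) ∧ ∀ x ∈ σ, ∀ y ∈ σ, x ≤ y ∨ y ≤ x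
  nonempty_of_mem := fun σ hσ => (Finset.mem_filter.mp hσ).2.1
  down_closed := by
    intro σ hσ τ hτσ hτ
    rw [Finset.mem_filter] at hσ ⊢
    exact ⟨Finset.mem_univ _, hτ, fun x hx => hσ.2.2.1 x (hτσ hx),
      fun x hx y hy => hσ.2.2.2 x (hτσ hx) y (hτσ hy)⟩

end OrderComplex
section Building

variable (F : Type*) [Field F] [Fintype F]

noncomputable instance : Fintype (Submodule F (Fin 4 → F)) := by
  have : Finite (Submodule F (Fin 4 → F)) :=
    Finite.of_injective (fun N => (N : Set (Fin 4 → F))) SetLike.coe_injective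
  exact Fintype.ofFinite _

noncomputable instance : DecidableEq (Submodule F (Fin 4 → F)) := Classical.decEq _

/-- The spherical building `A₃(F_q)`: the order complex of the poset of nontrivial proper
linear subspaces of `F_q⁴`. -/
noncomputable def A3 : SComplex (Submodule F (Fin 4 → F)) :=
  orderComplex (Submodule F (Fin 4 → F))

end Building
section FixEdge

variable {G : Type*} [Group G]

open Classical in
/-- The value `fix(d₁φ(u,v₁,v₂))` for an unordered edge `e = {v₁,v₂}` of the link of `u`
(well defined for cochains, since `fix` is invariant under inversion and conjugation). -/
noncomputable def fixEdge (S : Type*) [Fintype S] [MulAction G S] (φ : V → V → G)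
    (u : V) (e : Finset V) : ℕ :=
  sSup {k : ℕ | ∃ v₁ ∈ e, ∃ v₂ ∈ e, v₁ ≠ v₂ ∧ k = fixCard G S (d1 φ u v₁ v₂)}

end FixEdge

/-
A cocycle is flat on every simplex: on a simplex `σ ∋ u` the relations `φ(v,w) φ(w,u) = φ(v,u)`
hold, so `v ↦ [v, φ(v,u) s]` lifts `σ` to a simplex of `Y_φ` through `[u,s]`. Conversely any
simplex in the star of `[u,s]` is forced, vertex by vertex, to be this lift of its image, so
projecting the star of `[u,s]` is inverse to lifting through `[u,s]`.
-/

theorem IsCocycle.mul_eq {G : Type*} [Group G] {X : SComplex V} {φ : V → V → G}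
    (hφ : IsCocycle X φ) {u v w : V} (h : ({u, v, w} : Finset V) ∈ X.simps 2) :
    φ u v * φ v w = φ u w := by
  have hd : φ u v * φ v w * φ w u = 1 := hφ.2 u v w h
  rw [hφ.1 u w]
  exact mul_eq_one_iff_eq_inv.mp hd

namespace Ycomplex

variable {G : Type*} [Group G] {S : Type*} [MulAction G S] {X : SComplex V} {φ : V → V → G}

/-- The case split is needed because a cochain need not be trivial on the diagonal: it only
satisfies `φ(u,u)² = 1`. -/
def liftThrough (φ : V → V → G) (u : V) (s : S) (v : V) : V × S :=
  (v, if v = u then s else φ v u • s)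

theorem fst_comp_liftThrough (u : V) (s : S) : Prod.fst ∘ liftThrough φ u s = id := rfl

theorem image_fst_image_liftThrough [DecidableEq S] (u : V) (s : S) (σ : Finset V) :
    (σ.image (liftThrough φ u s)).image Prod.fst = σ := by
  rw [Finset.image_image, fst_comp_liftThrough, Finset.image_id]

theorem liftThrough_injective (u : V) (s : S) : Function.Injective (liftThrough φ u s) :=
  fun _ _ h => congrArg Prod.fst h

theorem liftThrough_snd_eq (hφ : IsCocycle X φ) {σ : Finset V} (hσ : σ ∈ X.faces)
    {u v w : V} (hu : u ∈ σ) (hv : v ∈ σ) (hw : w ∈ σ) (hvw : v ≠ w) (s : S) :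
    (liftThrough φ u s v).2 = φ v w • (liftThrough φ u s w).2 := by
  simp only [liftThrough]
  by_cases hwu : w = u
  · subst hwu
    rw [if_neg hvw, if_pos rfl]
  by_cases hvu : v = u
  · subst hvu
    rw [if_pos rfl, if_neg hwu, ← mul_smul, hφ.1 v w, inv_mul_cancel, one_smul]
  have htri : ({v, w, u} : Finset V) ∈ X.simps 2 := by
    refine Finset.mem_filter.mpr ⟨X.down_closed σ hσ _ ?_ (Finset.insert_nonempty _ _), ?_⟩
    · simp [Finset.insert_subset_iff, hu, hv, hw]
    · exact Finset.card_eq_three.mpr ⟨v, w, u, hvw, hvu, hwu, rfl⟩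
  rw [if_neg hvu, if_neg hwu, ← mul_smul, hφ.mul_eq htri]

theorem image_union_singleton_liftThrough [DecidableEq S] (u : V) (s : S) (σ : Finset V) :
    (σ ∪ {u}).image (liftThrough φ u s) = σ.image (liftThrough φ u s) ∪ {(u, s)} := by
  simp [liftThrough]

section Faces

variable [Fintype S] [DecidableEq S] [Fintype V]

theorem mem_faces {τ : Finset (V × S)} :
    τ ∈ (Ycomplex X φ S).faces ↔ τ.image Prod.fst ∈ X.faces ∧
      (τ.image Prod.fst).card = τ.card ∧
      ∀ p ∈ τ, ∀ q ∈ τ, p.1 ≠ q.1 → p.2 = φ p.1 q.1 • q.2 := by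
  simp [Ycomplex]

theorem image_fst_mem {τ : Finset (V × S)} (hτ : τ ∈ (Ycomplex X φ S).faces) :
    τ.image Prod.fst ∈ X.faces :=
  (mem_faces.mp hτ).1

theorem image_liftThrough_mem_faces (hφ : IsCocycle X φ) {σ : Finset V} (hσ : σ ∈ X.faces)
    {u : V} (hu : u ∈ σ) (s : S) : σ.image (liftThrough φ u s) ∈ (Ycomplex X φ S).faces := by
  refine mem_faces.mpr ⟨?_, ?_, ?_⟩
  · rwa [image_fst_image_liftThrough]
  · rw [image_fst_image_liftThrough, Finset.card_image_of_injective _ (liftThrough_injective u s)]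
  · simp only [Finset.mem_image]
    rintro _ ⟨v, hv, rfl⟩ _ ⟨w, hw, rfl⟩ hvw
    exact liftThrough_snd_eq hφ hσ hu hv hw hvw s

theorem eq_image_liftThrough_of_union_mem {u : V} {s : S} {τ : Finset (V × S)}
    (hτu : τ ∪ {(u, s)} ∈ (Ycomplex X φ S).faces) :
    τ = (τ.image Prod.fst).image (liftThrough φ u s) := by
  obtain ⟨-, hcard, hcompat⟩ := mem_faces.mp hτu
  have hinj : Set.InjOn Prod.fst (↑(τ ∪ {(u, s)}) : Set (V × S)) :=
    Finset.card_image_iff.mp hcard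
  have hus : (u, s) ∈ τ ∪ {(u, s)} := by simp
  have hlift : ∀ p ∈ τ, liftThrough φ u s p.1 = p := by
    intro p hp
    have hp' : p ∈ τ ∪ {(u, s)} := Finset.mem_union_left _ hp
    by_cases hpu : p.1 = u
    · obtain rfl : p = (u, s) := hinj hp' hus hpu
      simp [liftThrough]
    · simp only [liftThrough, if_neg hpu]
      exact Prod.ext rfl (hcompat p hp' (u, s) hus hpu).symm
  rw [Finset.image_image]
  exact (Finset.image_congr hlift).trans Finset.image_id |>.symm

theorem exists_preimage_face [Nonempty S] (hφ : IsCocycle X φ) {σ : Finset V}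
    (hσ : σ ∈ X.faces) : ∃ τ ∈ (Ycomplex X φ S).faces, τ.image Prod.fst = σ := by
  obtain ⟨u, hu⟩ := X.nonempty_of_mem σ hσ
  let s : S := Classical.arbitrary S
  exact ⟨σ.image (liftThrough φ u s), image_liftThrough_mem_faces hφ hσ hu s,
    image_fst_image_liftThrough u s σ⟩

theorem bijOn_image_fst_star (hφ : IsCocycle X φ) (u : V) (s : S) :
    Set.BijOn (fun τ : Finset (V × S) => τ.image Prod.fst)
      ((Ycomplex X φ S).star {(u, s)} : Set (Finset (V × S))) (X.star {u} : Set (Finset V)) := by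
  simp only [SComplex.star, Finset.coe_filter]
  refine ⟨?_, ?_, ?_⟩
  · rintro τ ⟨hτ, hτu⟩
    have hτuX := image_fst_mem hτu
    rw [Finset.image_union, Finset.image_singleton] at hτuX
    exact ⟨image_fst_mem hτ, hτuX⟩
  · rintro τ₁ ⟨-, hτ₁⟩ τ₂ ⟨-, hτ₂⟩ h
    rw [eq_image_liftThrough_of_union_mem hτ₁, eq_image_liftThrough_of_union_mem hτ₂]
    exact congrArg (Finset.image (liftThrough φ u s)) h
  · rintro σ ⟨hσ, hσu⟩
    have hlift : σ.image (liftThrough φ u s) ∪ {(u, s)} ∈ (Ycomplex X φ S).faces := by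
      rw [← image_union_singleton_liftThrough]
      exact image_liftThrough_mem_faces hφ hσu (by simp) s
    refine ⟨σ.image (liftThrough φ u s), ⟨?_, hlift⟩, image_fst_image_liftThrough u s σ⟩
    exact (Ycomplex X φ S).down_closed _ hlift _ Finset.subset_union_left
      (Finset.image_nonempty.mpr (X.nonempty_of_mem σ hσ))

end Faces

end Ycomplex

theorem Ycomplex_covering_of_cocycle_general
    {V : Type*} [Fintype V] [DecidableEq V]
    {G : Type*} [Group G] (S : Type*) [Fintype S] [DecidableEq S] [Nonempty S]
    [MulAction G S]
    (X : SComplex V)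
    (φ : V → V → G) (hφ : IsCocycle X φ) :
    (∀ τ ∈ (Ycomplex X φ S).faces, τ.image Prod.fst ∈ X.faces) ∧
      (∀ σ ∈ X.faces, ∃ τ ∈ (Ycomplex X φ S).faces, τ.image Prod.fst = σ) ∧
      ∀ (u : V) (s : S), ({(u, s)} : Finset (V × S)) ∈ (Ycomplex X φ S).faces →
        Set.BijOn (fun τ : Finset (V × S) => τ.image Prod.fst)
          ((Ycomplex X φ S).star {(u, s)} : Set (Finset (V × S)))
          (X.star {u} : Set (Finset V)) :=
  ⟨fun _ => Ycomplex.image_fst_mem, fun _ => Ycomplex.exists_preimage_face hφ,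
    fun u s _ => Ycomplex.bijOn_image_fst_star hφ u s⟩

/-- cocycles give covers: if `φ ∈ Z¹(X;G)` then the projection
`Y_φ → X` is a covering map: it is simplicial, surjective, and restricts to an
isomorphism from the star of each vertex of `Y_φ` onto the star of its image. -/
theorem Ycomplex_covering_of_cocycle
    {V : Type*} [Fintype V] [DecidableEq V]
    {G : Type*} [Group G] (S : Type*) [Fintype S] [DecidableEq S] [Nonempty S]
    [MulAction G S]
    (X : SComplex V) (hconn : SComplexConnected X)
    (φ : V → V → G) (hφ : IsCocycle X φ) :
    (∀ τ ∈ (Ycomplex X φ S).faces, τ.image Prod.fst ∈ X.faces) ∧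
      (∀ σ ∈ X.faces, ∃ τ ∈ (Ycomplex X φ S).faces, τ.image Prod.fst = σ) ∧
      ∀ (u : V) (s : S), ({(u, s)} : Finset (V × S)) ∈ (Ycomplex X φ S).faces →
        Set.BijOn (fun τ : Finset (V × S) => τ.image Prod.fst)
          ((Ycomplex X φ S).star {(u, s)} : Set (Finset (V × S)))
          (X.star {u} : Set (Finset V)) :=
  Ycomplex_covering_of_cocycle_general S X φ hφ
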